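/- Let F = (F_1,…,F_T) and F* = (F*_1,…,F*_T) be T-tuples of subsets of [n] with coverage values v_i = 1 + |{t : i ∈ F_t}| and v*_i = 1 + |{t : i ∈ F*_t}|. Define φ(G) = ∑_i log(v_i(G)). Then (1/T) ∑_{t=1}^T (φ(F*_t, F_{-t}) - φ(F)) ≥ (1/T) ∑_{i=1}^n (v*_i - 1)/(v_i + 1) - n/T. -/

import Mathlib

/-- Coverage value of agent `i` under solution `F`. -/
def cov {n T : ℕ} (F : Fin T → Finset (Fin n)) (i : Fin n) : ℕ :=
  1 + (Finset.univ.filter fun t => i ∈ F t).card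

/-- Log social welfare of a solution. -/
noncomputable def phi {n T : ℕ} (F : Fin T → Finset (Fin n)) : ℝ :=
  ∑ i, Real.log (cov F i)

/-!
Swapping the two sums, it suffices to bound, for each agent `i` with `v = cov F i`, the sum over
`t` of `log v' - log v`, where the coverage `v'` after replacing `F t` by `F* t` is `v`, `v + 1`
or `v - 1`. By `log v' - log v ≥ (v' - v) / v'` each term is at least
`[i ∈ F* t] / (v + 1) - [i ∈ F t] / (v - 1)`, and summing over `t` gives
`(v* - 1) / (v + 1) - (v - 1) / (v - 1) ≥ (v* - 1) / (v + 1) - 1` (the quotient is `0` when `v = 1`).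
-/

open Finset Real

lemma sub_div_le_log_sub_log {x y : ℝ} (hx : 0 < x) (hy : 0 < y) :
    (x - y) / x ≤ log x - log y := by
  have h := one_sub_inv_le_log_of_pos (div_pos hx hy)
  rwa [log_div hx.ne' hy.ne', inv_div, sub_div' hx.ne', one_mul] at h

section Coverage

variable {n T : ℕ}

lemma cov_eq_one_add_sum (F : Fin T → Finset (Fin n)) (i : Fin n) :
    (cov F i : ℝ) = 1 + ∑ t, if i ∈ F t then 1 else 0 := by
  rw [cov, Nat.cast_add, Nat.cast_one, natCast_card_filter]

lemma one_le_cov (F : Fin T → Finset (Fin n)) (i : Fin n) : 1 ≤ cov F i :=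
  Nat.le_add_right 1 _

lemma two_le_cov_of_mem {F : Fin T → Finset (Fin n)} {i : Fin n} {t : Fin T} (h : i ∈ F t) :
    2 ≤ cov F i :=
  Nat.add_le_add_left (card_pos.mpr ⟨t, mem_filter.mpr ⟨mem_univ t, h⟩⟩) 1

lemma cov_update_add (F : Fin T → Finset (Fin n)) (t : Fin T) (S : Finset (Fin n))
    (i : Fin n) :
    (cov (Function.update F t S) i : ℝ) + (if i ∈ F t then 1 else 0) =
      cov F i + (if i ∈ S then 1 else 0) := by
  have hrest : ∑ s ∈ univ.erase t, (if i ∈ Function.update F t S s then (1 : ℝ) else 0) =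
      ∑ s ∈ univ.erase t, if i ∈ F s then 1 else 0 :=
    sum_congr rfl fun s hs => by rw [Function.update_of_ne (ne_of_mem_erase hs)]
  simp only [cov_eq_one_add_sum, ← add_sum_erase _ _ (mem_univ t), hrest,
    Function.update_self]
  ring

lemma div_sub_div_le_log_cov_update_sub_log_cov (F : Fin T → Finset (Fin n))
    (t : Fin T) (S : Finset (Fin n)) (i : Fin n) :
    (if i ∈ S then 1 else 0) / ((cov F i : ℝ) + 1) - (if i ∈ F t then 1 else 0) / ((cov F i : ℝ) - 1) ≤
      log (cov (Function.update F t S) i) - log (cov F i) := by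
  have hupd := cov_update_add F t S i
  have hw : (1 : ℝ) ≤ cov (Function.update F t S) i := by exact_mod_cast one_le_cov _ i
  have hv : (1 : ℝ) ≤ cov F i := by exact_mod_cast one_le_cov F i
  have hv2 : i ∈ F t → (2 : ℝ) ≤ cov F i := fun hF => by exact_mod_cast two_le_cov_of_mem hF
  generalize (cov (Function.update F t S) i : ℝ) = w at *
  generalize (cov F i : ℝ) = v at *
  refine le_trans ?_ (sub_div_le_log_sub_log (by linarith) (by linarith))
  split_ifs at hupd ⊢ with hS hF hF
  · obtain rfl : w = v := by linarith
    rw [sub_self, zero_div, sub_nonpos]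
    exact one_div_le_one_div_of_le (by linarith [hv2 hF]) (by linarith)
  · obtain rfl : w = v + 1 := by linarith
    simp
  · obtain rfl : v = w + 1 := by linarith
    exact le_of_eq (by ring)
  · obtain rfl : w = v := by linarith
    simp

lemma cov_div_sub_one_le_sum_log_cov_update (F Fstar : Fin T → Finset (Fin n)) (i : Fin n) :
    ((cov Fstar i : ℝ) - 1) / ((cov F i : ℝ) + 1) - 1 ≤
      ∑ t, (log (cov (Function.update F t (Fstar t)) i) - log (cov F i)) := by
  have hFstar : ∑ t, (if i ∈ Fstar t then (1 : ℝ) else 0) = cov Fstar i - 1 := by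
    rw [cov_eq_one_add_sum]; ring
  have hF : ∑ t, (if i ∈ F t then (1 : ℝ) else 0) = cov F i - 1 := by
    rw [cov_eq_one_add_sum]; ring
  calc ((cov Fstar i : ℝ) - 1) / ((cov F i : ℝ) + 1) - 1
      ≤ ((cov Fstar i : ℝ) - 1) / ((cov F i : ℝ) + 1) -
          ((cov F i : ℝ) - 1) / ((cov F i : ℝ) - 1) := by
        gcongr; exact div_self_le_one _
    _ = ∑ t, ((if i ∈ Fstar t then 1 else 0) / ((cov F i : ℝ) + 1) -
          (if i ∈ F t then 1 else 0) / ((cov F i : ℝ) - 1)) := by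
        rw [sum_sub_distrib, ← sum_div, ← sum_div, hFstar, hF]
    _ ≤ _ := sum_le_sum fun t _ => div_sub_div_le_log_cov_update_sub_log_cov F t (Fstar t) i

end Coverage

theorem expected_phi_diff {n T : ℕ} (F Fstar : Fin T → Finset (Fin n)) :
    (1 / (T : ℝ)) * ∑ t, (phi (Function.update F t (Fstar t)) - phi F) ≥
      (1 / (T : ℝ)) * (∑ i, ((cov Fstar i : ℝ) - 1) / ((cov F i : ℝ) + 1)) -
        (n : ℝ) / T := by
  have hswap : ∑ t, (phi (Function.update F t (Fstar t)) - phi F) =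
      ∑ i, ∑ t, (log (cov (Function.update F t (Fstar t)) i) - log (cov F i)) := by
    simp only [phi, ← sum_sub_distrib]
    exact sum_comm
  have hsum : ∑ i, ((cov Fstar i : ℝ) - 1) / ((cov F i : ℝ) + 1) - n ≤
      ∑ t, (phi (Function.update F t (Fstar t)) - phi F) := by
    have hn : (n : ℝ) = ∑ _i : Fin n, 1 := by simp
    rw [hswap, hn, ← sum_sub_distrib]
    exact sum_le_sum fun i _ => cov_div_sub_one_le_sum_log_cov_update F Fstar i
  calc (1 / (T : ℝ)) * (∑ i, ((cov Fstar i : ℝ) - 1) / ((cov F i : ℝ) + 1)) - n / T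
      = (1 / (T : ℝ)) * (∑ i, ((cov Fstar i : ℝ) - 1) / ((cov F i : ℝ) + 1) - n) := by ring
    _ ≤ (1 / (T : ℝ)) * ∑ t, (phi (Function.update F t (Fstar t)) - phi F) := by gcongr
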